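/- arXiv:1608.01145 — 3 statements merged into one kernel-verified Lean document; each statement's English description precedes it below -/
import Mathlib

section
/- For every x in [0,1), the series f(x) = Σ_{n=1}^∞ x^n/√n satisfies f(x) ≤ 2/√(1-x) - 2. -/
/-!
The binomial series gives `1 / √(1 - x) = ∑ₙ C(2n, n) (x / 4) ^ n`, and the central binomial
coefficients satisfy `C(2n, n) / 4 ^ n ≥ 1 / (2 √n)` for `n ≥ 1` (square it and induct using
`(n + 1) C(2n + 2, n + 1) = 2 (2n + 1) C(2n, n)`). Comparing the two series termwise from `n = 1`
on gives `f(x) ≤ 2 (1 / √(1 - x) - 1)`.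
-/

open Nat

theorem Ring.choose_neg_one_half {K : Type*} [Field K] [CharZero K] (n : ℕ) :
    Ring.choose (-(1 / 2) : K) n = (-1 / 4) ^ n * n.centralBinom := by
  induction n with
  | zero => simp
  | succ n ih =>
    have hrec := Ring.choose_smul_choose (-(1 / 2) : K) (Nat.le_succ n)
    rw [Nat.choose_succ_self_right, Nat.succ_sub (le_refl n), Nat.sub_self,
      Ring.choose_one_right, ih, nsmul_eq_mul] at hrec
    have hC : ((n : K) + 1) * (n + 1).centralBinom = 2 * (2 * n + 1) * n.centralBinom := by
      exact_mod_cast succ_mul_centralBinom_succ n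
    have hn : (n : K) + 1 ≠ 0 := by exact_mod_cast succ_ne_zero n
    push_cast at hrec
    apply mul_left_cancel₀ hn
    rw [hrec, pow_succ]
    linear_combination (-1 / 4 : K) ^ n / 4 * hC

theorem four_pow_sq_le_four_mul_mul_centralBinom_sq {n : ℕ} (hn : 0 < n) :
    (4 ^ n) ^ 2 ≤ 4 * n * n.centralBinom ^ 2 := by
  induction n, hn using Nat.le_induction with
  | base => decide
  | succ n hn ih =>
    have hC := succ_mul_centralBinom_succ n
    have h : 4 * n * (n + 1) ≤ (2 * n + 1) ^ 2 := by nlinarith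
    refine Nat.le_of_mul_le_mul_left ?_ (Nat.succ_pos n)
    calc (n + 1) * (4 ^ (n + 1)) ^ 2 = 16 * (n + 1) * (4 ^ n) ^ 2 := by ring
      _ ≤ 16 * (n + 1) * (4 * n * n.centralBinom ^ 2) := by gcongr
      _ = 16 * (4 * n * (n + 1)) * n.centralBinom ^ 2 := by ring
      _ ≤ 16 * (2 * n + 1) ^ 2 * n.centralBinom ^ 2 := by gcongr
      _ = 4 * (2 * (2 * n + 1) * n.centralBinom) ^ 2 := by ring
      _ = (n + 1) * (4 * (n + 1) * (n + 1).centralBinom ^ 2) := by rw [← hC]; ring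

theorem hasSum_centralBinom_div_four_pow_mul_pow {x : ℝ} (hx : |x| < 1) :
    HasSum (fun n ↦ n.centralBinom / 4 ^ n * x ^ n) (1 / √(1 - x)) := by
  have hx' : -x ∈ Metric.eball (0 : ℝ) 1 := by
    simpa [Metric.mem_eball, edist_zero_right, enorm_eq_nnnorm, ← NNReal.coe_lt_one] using hx
  have hsum := Real.one_add_rpow_hasFPowerSeriesOnBall_zero (a := -(1 / 2)).hasSum hx'
  have hcoeff (n : ℕ) : binomialSeries ℝ (-(1 / 2) : ℝ) n (fun _ ↦ -x)
      = n.centralBinom / 4 ^ n * x ^ n := by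
    rw [binomialSeries_apply, Ring.choose_neg_one_half, List.ofFn_const, List.prod_replicate,
      smul_eq_mul, neg_pow x, div_pow]
    have hsq : (-1 : ℝ) ^ n * (-1) ^ n = 1 := by rw [← mul_pow]; norm_num
    linear_combination n.centralBinom / 4 ^ n * x ^ n * hsq
  have hval : (1 + (0 + -x)) ^ (-(1 / 2) : ℝ) = 1 / √(1 - x) := by
    rw [zero_add, ← sub_eq_add_neg, Real.rpow_neg (by linarith [abs_lt.mp hx]),
      ← Real.sqrt_eq_rpow, one_div]
  simpa only [hcoeff, hval] using hsum

theorem one_div_sqrt_le_two_mul_centralBinom_div_four_pow {n : ℕ} (hn : 0 < n) :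
    1 / √n ≤ 2 * (n.centralBinom / 4 ^ n) := by
  have hsq : ((4 : ℝ) ^ n) ^ 2 ≤ (2 * n.centralBinom) ^ 2 * n := by
    rw [mul_pow, mul_right_comm]
    exact_mod_cast four_pow_sq_le_four_mul_mul_centralBinom_sq hn
  have hle := Real.sqrt_le_sqrt hsq
  rw [Real.sqrt_sq (by positivity), Real.sqrt_mul (by positivity), Real.sqrt_sq (by positivity)]
    at hle
  rw [div_le_iff₀ (by positivity), mul_div_assoc', div_mul_eq_mul_div,
    le_div_iff₀ (by positivity)]
  linarith

/-- For every `x ∈ [0,1)`, the series `f(x) = ∑_{n=1}^∞ x^n/√n` satisfies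
`f(x) ≤ 2/√(1-x) - 2`. -/
theorem stmt0 (x : ℝ) (hx : x ∈ Set.Ico (0:ℝ) 1) :
    (∑' n : ℕ, x ^ (n + 1) / Real.sqrt (n + 1)) ≤ 2 / Real.sqrt (1 - x) - 2 := by
  obtain ⟨hx0, hx1⟩ := hx
  have hseries := hasSum_centralBinom_div_four_pow_mul_pow (abs_lt.mpr ⟨by linarith, hx1⟩)
  have htail : HasSum (fun n ↦ (n + 1).centralBinom / 4 ^ (n + 1) * x ^ (n + 1))
      (1 / √(1 - x) - 1) := by
    simpa using (hasSum_nat_add_iff' 1).mpr hseries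
  have hterm (n : ℕ) : x ^ (n + 1) / √(n + 1)
      ≤ 2 * ((n + 1).centralBinom / 4 ^ (n + 1) * x ^ (n + 1)) := by
    have hcoeff := one_div_sqrt_le_two_mul_centralBinom_div_four_pow n.succ_pos
    push_cast at hcoeff
    rw [div_eq_mul_one_div, mul_comm, ← mul_assoc]
    gcongr
  have hsummable : Summable fun n : ℕ ↦ x ^ (n + 1) / √(n + 1) :=
    .of_nonneg_of_le (fun n ↦ by positivity) hterm (htail.mul_left 2).summable
  calc ∑' n : ℕ, x ^ (n + 1) / √(n + 1) ≤ 2 * (1 / √(1 - x) - 1) :=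
        hasSum_le hterm hsummable.hasSum (htail.mul_left 2)
    _ = 2 / √(1 - x) - 2 := by ring
end

section
/- For all real x and y with y ≠ x and y ≠ -x, the integral Δ_y(x) = (1/√(2π)) ∫_0^∞ e^{-t}/(1-e^{-2t})^{3/2} · (y - e^{-t}x) · exp(-(y - e^{-t}x)²/(2(1-e^{-2t}))) dt equals e^{(x²-y²)/2} (Φ(x) - 1_{x>y}), where Φ is the standard Gaussian CDF. -/
/-!
Put `r(t) = (x - e^{-t} y) / √(1 - e^{-2t})`. Then
`(y - e^{-t} x)² / (1 - e^{-2t}) = r(t)² + y² - x²` and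
`r'(t) = e^{-t} (y - e^{-t} x) / (1 - e^{-2t})^{3/2}`, so the integrand is
`√(2π) e^{(x²-y²)/2} (Φ ∘ r)'(t)`. As `t → ∞`, `r(t) → x`; as `t → 0⁺`, `r(t) → ±∞` with
the sign of `x - y`, so `Φ(r(t)) → 1_{x>y}`, and the fundamental theorem of calculus on
`(0, ∞)` gives the formula. Integrability comes from `z (1 + z²) e^{-z²/2} ≤ 4`, which bounds
the integrand by `4 e^{-t} / (1 - e^{-2t} + (y - e^{-t} x)²)`; for `y ≠ x` that denominator
stays away from `0`.
-/

noncomputable def gaussCDF (x : ℝ) : ℝ :=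
  (Real.sqrt (2 * Real.pi))⁻¹ * ∫ τ in Set.Iic x, Real.exp (-τ ^ 2 / 2)

open Real MeasureTheory Set Filter Topology

theorem integral_Ioi_of_hasDerivAt_of_tendsto_nhdsGT {E : Type*} [NormedAddCommGroup E]
    [NormedSpace ℝ E] [CompleteSpace E] {f f' : ℝ → E} {a : ℝ} {l m : E}
    (hderiv : ∀ x ∈ Ioi a, HasDerivAt f (f' x) x) (hint : IntegrableOn f' (Ioi a))
    (hleft : Tendsto f (𝓝[>] a) (𝓝 l)) (hright : Tendsto f atTop (𝓝 m)) :
    ∫ x in Ioi a, f' x = m - l := by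
  classical
  have hcont : ContinuousWithinAt (Function.update f a l) (Ici a) a := by
    rwa [continuousWithinAt_update_same, Ici_sdiff_left]
  have hderiv' : ∀ x ∈ Ioi a, HasDerivAt (Function.update f a l) (f' x) x := fun x hx =>
    (hderiv x hx).congr_of_eventuallyEq <| by
      filter_upwards [eventually_ne_nhds (ne_of_gt hx)] with u hu
      exact Function.update_of_ne hu _ _
  have hright' : Tendsto (Function.update f a l) atTop (𝓝 m) :=
    hright.congr' <| by
      filter_upwards [eventually_ne_atTop a] with u hu
      exact (Function.update_of_ne hu _ _).symm
  simpa using integral_Ioi_of_hasDerivAt_of_tendsto hcont hderiv' hint hright'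

theorem hasDerivAt_integral_Iic {E : Type*} [NormedAddCommGroup E] [NormedSpace ℝ E]
    [CompleteSpace E] {f : ℝ → E} (hf : Continuous f) (hint : Integrable f) (z : ℝ) :
    HasDerivAt (fun u => ∫ x in Iic u, f x) (f z) z := by
  have hsplit :
      (fun u => ∫ x in Iic u, f x) = fun u => (∫ x in Iic 0, f x) + ∫ x in 0..u, f x := by
    funext u
    rw [← intervalIntegral.integral_Iic_sub_Iic hint.integrableOn hint.integrableOn]
    abel
  rw [hsplit]
  exact (intervalIntegral.integral_hasDerivAt_right hint.intervalIntegrable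
    (hf.stronglyMeasurableAtFilter _ _) hf.continuousAt).const_add _

theorem exp_neg_sq_div_two_eq_exp_neg_mul_sq (τ : ℝ) :
    exp (-τ ^ 2 / 2) = exp (-(1 / 2) * τ ^ 2) := by
  ring_nf

theorem integrable_exp_neg_sq_div_two : Integrable fun τ : ℝ => exp (-τ ^ 2 / 2) := by
  simpa only [exp_neg_sq_div_two_eq_exp_neg_mul_sq] using
    integrable_exp_neg_mul_sq (by norm_num : (0:ℝ) < 1 / 2)

theorem integral_exp_neg_sq_div_two : ∫ τ : ℝ, exp (-τ ^ 2 / 2) = √(2 * π) := by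
  simp only [exp_neg_sq_div_two_eq_exp_neg_mul_sq, integral_gaussian]
  congr 1; field_simp

theorem hasDerivAt_gaussCDF (z : ℝ) :
    HasDerivAt gaussCDF ((√(2 * π))⁻¹ * exp (-z ^ 2 / 2)) z :=
  (hasDerivAt_integral_Iic (by fun_prop) integrable_exp_neg_sq_div_two z).const_mul _

theorem tendsto_gaussCDF_atTop : Tendsto gaussCDF atTop (𝓝 1) := by
  have h := ((aecover_Iic tendsto_id).integral_tendsto_of_countably_generated
    integrable_exp_neg_sq_div_two).const_mul (√(2 * π))⁻¹
  rwa [integral_exp_neg_sq_div_two, inv_mul_cancel₀ (by positivity)] at h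

theorem tendsto_gaussCDF_atBot : Tendsto gaussCDF atBot (𝓝 0) := by
  have h := (tendsto_integral_Iic_zero (f := fun τ : ℝ => exp (-τ ^ 2 / 2)) (μ := volume)
    tendsto_id).const_mul (√(2 * π))⁻¹
  rwa [mul_zero] at h

theorem mul_one_add_sq_mul_exp_neg_sq_div_two_le (z : ℝ) :
    z * (1 + z ^ 2) * exp (-z ^ 2 / 2) ≤ 4 := by
  have hexp := quadratic_le_exp_of_nonneg (show 0 ≤ z ^ 2 / 2 by positivity)
  rw [neg_div, exp_neg, ← div_eq_mul_inv, div_le_iff₀ (exp_pos _)]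
  nlinarith [sq_nonneg (z - 2), sq_nonneg (z * (z - 1))]

theorem rpow_three_div_two_eq_mul_sqrt {v : ℝ} (hv : 0 ≤ v) : v ^ ((3:ℝ) / 2) = v * √v := by
  rw [sqrt_eq_rpow, show (3:ℝ) / 2 = 1 + 1 / 2 by norm_num, rpow_add' hv (by norm_num), rpow_one]

theorem abs_mul_exp_neg_sq_div_le (s : ℝ) {v : ℝ} (hv : 0 < v) :
    |s| * exp (-s ^ 2 / (2 * v)) / v ^ ((3:ℝ) / 2) ≤ 4 / (v + s ^ 2) := by
  obtain ⟨q, hq, rfl⟩ : ∃ q > 0, v = q ^ 2 := ⟨√v, sqrt_pos.2 hv, (sq_sqrt hv.le).symm⟩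
  set z := |s| / q
  have hs : |s| = z * q := by simp only [z]; field_simp
  have hs2 : s ^ 2 = z ^ 2 * q ^ 2 := by rw [← sq_abs, hs]; ring
  have hexp : exp (-s ^ 2 / (2 * q ^ 2)) = exp (-z ^ 2 / 2) := by
    rw [hs2]; congr 1; field_simp
  have key := mul_one_add_sq_mul_exp_neg_sq_div_two_le z
  rw [rpow_three_div_two_eq_mul_sqrt (by positivity), sqrt_sq hq.le, hexp, hs, hs2,
    div_le_div_iff₀ (by positivity) (by positivity)]
  have hq3 : 0 < q ^ 3 := by positivity
  nlinarith [mul_le_mul_of_nonneg_left key hq3.le]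

/-- The z-score of `x` under `N(e^{-t} y, 1 - e^{-2t})`, the time-`t` law of the
Ornstein–Uhlenbeck process started at `y`. -/
noncomputable def ouZScore (x y t : ℝ) : ℝ := (x - exp (-t) * y) / √(1 - exp (-2 * t))

noncomputable def deltaIntegrand (x y t : ℝ) : ℝ :=
  exp (-t) / (1 - exp (-2 * t)) ^ ((3:ℝ) / 2) * (y - exp (-t) * x) *
    exp (-(y - exp (-t) * x) ^ 2 / (2 * (1 - exp (-2 * t))))

theorem exp_neg_two_mul_eq_sq (t : ℝ) : exp (-2 * t) = exp (-t) ^ 2 := by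
  rw [← exp_nat_mul]; ring_nf

theorem one_sub_exp_neg_two_mul_pos {t : ℝ} (ht : 0 < t) : 0 < 1 - exp (-2 * t) := by
  rw [sub_pos, Real.exp_lt_one_iff]; linarith

theorem hasDerivAt_ouZScore (x y : ℝ) {t : ℝ} (ht : 0 < t) :
    HasDerivAt (ouZScore x y)
      (exp (-t) * (y - exp (-t) * x) / (1 - exp (-2 * t)) ^ ((3:ℝ) / 2)) t := by
  have hv := one_sub_exp_neg_two_mul_pos ht
  have hexp : HasDerivAt (fun t => exp (-t)) (-exp (-t)) t := by
    simpa using (hasDerivAt_neg t).exp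
  have hnum := (hexp.mul_const y).const_sub x
  have hden := (((hasDerivAt_id t).const_mul (-2)).exp.const_sub 1).sqrt hv.ne'
  refine (hnum.div hden (sqrt_pos.2 hv).ne').congr_deriv ?_
  have hsq := sq_sqrt hv.le
  simp only [id, rpow_three_div_two_eq_mul_sqrt hv.le]
  rw [exp_neg_two_mul_eq_sq] at hv hsq ⊢
  field_simp
  rw [hsq]
  ring

theorem exp_neg_sq_div_eq_mul_exp_neg_ouZScore_sq (x y : ℝ) {t : ℝ} (ht : 0 < t) :
    exp (-(y - exp (-t) * x) ^ 2 / (2 * (1 - exp (-2 * t)))) =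
      exp ((x ^ 2 - y ^ 2) / 2) * exp (-ouZScore x y t ^ 2 / 2) := by
  have hv := one_sub_exp_neg_two_mul_pos ht
  rw [← exp_add, ouZScore, div_pow, sq_sqrt hv.le]
  congr 1
  rw [exp_neg_two_mul_eq_sq] at hv ⊢
  field_simp
  ring

theorem hasDerivAt_mul_gaussCDF_ouZScore (x y : ℝ) {t : ℝ} (ht : 0 < t) :
    HasDerivAt (fun t => √(2 * π) * exp ((x ^ 2 - y ^ 2) / 2) * gaussCDF (ouZScore x y t))
      (deltaIntegrand x y t) t := by
  refine (((hasDerivAt_gaussCDF _).comp t (hasDerivAt_ouZScore x y ht)).const_mul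
    (√(2 * π) * exp ((x ^ 2 - y ^ 2) / 2))).congr_deriv ?_
  rw [deltaIntegrand, exp_neg_sq_div_eq_mul_exp_neg_ouZScore_sq x y ht]
  field_simp

theorem tendsto_ouZScore_atTop (x y : ℝ) : Tendsto (ouZScore x y) atTop (𝓝 x) := by
  have hcont : ContinuousAt (fun u : ℝ => (x - u * y) / √(1 - u ^ 2)) 0 :=
    ContinuousAt.div (by fun_prop) (by fun_prop) (by simp)
  convert hcont.tendsto.comp tendsto_exp_neg_atTop_nhds_zero using 2
  · ext t
    simp only [ouZScore, Function.comp_apply, exp_neg_two_mul_eq_sq]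
  · simp

theorem tendsto_inv_sqrt_one_sub_exp_neg_two_mul_nhdsGT_zero :
    Tendsto (fun t : ℝ => (√(1 - exp (-2 * t)))⁻¹) (𝓝[>] 0) atTop := by
  refine Tendsto.inv_tendsto_nhdsGT_zero
    (tendsto_nhdsWithin_of_tendsto_nhds_of_eventually_within _ ?_ ?_)
  · exact ((by fun_prop : Continuous fun t : ℝ => √(1 - exp (-2 * t))).tendsto' 0 0
      (by simp)).mono_left nhdsWithin_le_nhds
  · filter_upwards [self_mem_nhdsWithin] with t ht
    exact sqrt_pos.2 (one_sub_exp_neg_two_mul_pos ht)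

theorem tendsto_sub_exp_neg_mul_nhdsGT_zero (x y : ℝ) :
    Tendsto (fun t : ℝ => x - exp (-t) * y) (𝓝[>] 0) (𝓝 (x - y)) :=
  ((by fun_prop : Continuous fun t : ℝ => x - exp (-t) * y).tendsto' 0 (x - y)
    (by simp)).mono_left nhdsWithin_le_nhds

theorem tendsto_ouZScore_nhdsGT_zero_atTop {x y : ℝ} (h : y < x) :
    Tendsto (ouZScore x y) (𝓝[>] 0) atTop := by
  unfold ouZScore
  simp only [div_eq_mul_inv]
  exact (tendsto_sub_exp_neg_mul_nhdsGT_zero x y).pos_mul_atTop (sub_pos.2 h)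
    tendsto_inv_sqrt_one_sub_exp_neg_two_mul_nhdsGT_zero

theorem tendsto_ouZScore_nhdsGT_zero_atBot {x y : ℝ} (h : x < y) :
    Tendsto (ouZScore x y) (𝓝[>] 0) atBot := by
  unfold ouZScore
  simp only [div_eq_mul_inv]
  exact (tendsto_sub_exp_neg_mul_nhdsGT_zero x y).neg_mul_atTop (sub_neg.2 h)
    tendsto_inv_sqrt_one_sub_exp_neg_two_mul_nhdsGT_zero

theorem tendsto_gaussCDF_ouZScore_nhdsGT_zero {x y : ℝ} (h : y ≠ x) :
    Tendsto (fun t => gaussCDF (ouZScore x y t)) (𝓝[>] 0) (𝓝 (if x > y then 1 else 0)) := by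
  rcases h.lt_or_gt with h | h
  · rw [if_pos h]
    exact tendsto_gaussCDF_atTop.comp (tendsto_ouZScore_nhdsGT_zero_atTop h)
  · rw [if_neg h.not_gt]
    exact tendsto_gaussCDF_atBot.comp (tendsto_ouZScore_nhdsGT_zero_atBot h)

theorem exists_pos_le_one_sub_exp_neg_two_mul_add_sq {x y : ℝ} (h : y ≠ x) :
    ∃ m > 0, ∀ t : ℝ, 0 ≤ t → m ≤ 1 - exp (-2 * t) + (y - exp (-t) * x) ^ 2 := by
  obtain ⟨u₀, hu₀, hmin⟩ := isCompact_Icc.exists_isMinOn (nonempty_Icc.2 zero_le_one)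
    (by fun_prop : Continuous fun u : ℝ => 1 - u ^ 2 + (y - u * x) ^ 2).continuousOn
  refine ⟨1 - u₀ ^ 2 + (y - u₀ * x) ^ 2, ?_, fun t ht => ?_⟩
  · rcases hu₀.2.lt_or_eq with hlt | rfl
    · nlinarith [hu₀.1, sq_nonneg (y - u₀ * x)]
    · have := sub_ne_zero.2 h
      simp only [one_pow, sub_self, one_mul, zero_add]
      positivity
  · rw [exp_neg_two_mul_eq_sq]
    exact isMinOn_iff.1 hmin _ ⟨(exp_pos _).le, exp_le_one_iff.2 (by linarith)⟩

theorem abs_deltaIntegrand_le (x y : ℝ) {t : ℝ} (ht : 0 < t) :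
    |deltaIntegrand x y t| ≤ 4 * exp (-t) / (1 - exp (-2 * t) + (y - exp (-t) * x) ^ 2) := by
  have hv := one_sub_exp_neg_two_mul_pos ht
  calc |deltaIntegrand x y t|
      = exp (-t) * (|y - exp (-t) * x| *
          exp (-(y - exp (-t) * x) ^ 2 / (2 * (1 - exp (-2 * t)))) /
          (1 - exp (-2 * t)) ^ ((3:ℝ) / 2)) := by
        rw [deltaIntegrand, abs_mul, abs_mul, abs_div, abs_of_pos (exp_pos _),
          abs_of_pos (rpow_pos_of_pos hv _), abs_of_pos (exp_pos _)]
        ring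
    _ ≤ exp (-t) * (4 / (1 - exp (-2 * t) + (y - exp (-t) * x) ^ 2)) :=
        mul_le_mul_of_nonneg_left (abs_mul_exp_neg_sq_div_le _ hv) (exp_pos _).le
    _ = _ := by ring

theorem integrableOn_deltaIntegrand {x y : ℝ} (h : y ≠ x) :
    IntegrableOn (deltaIntegrand x y) (Ioi 0) := by
  obtain ⟨m, hm, hle⟩ := exists_pos_le_one_sub_exp_neg_two_mul_add_sq h
  refine Integrable.mono' ((integrableOn_exp_neg_Ioi 0).const_mul (4 / m))
    (by unfold deltaIntegrand; fun_prop : Measurable (deltaIntegrand x y)).aestronglyMeasurable ?_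
  filter_upwards [ae_restrict_mem measurableSet_Ioi] with t ht
  calc ‖deltaIntegrand x y t‖
      ≤ 4 * exp (-t) / (1 - exp (-2 * t) + (y - exp (-t) * x) ^ 2) :=
        abs_deltaIntegrand_le x y ht
    _ ≤ 4 * exp (-t) / m := by gcongr; exact hle t ht.out.le
    _ = 4 / m * exp (-t) := by ring

theorem stmt3_general (x y : ℝ) (h1 : y ≠ x) :
    (Real.sqrt (2 * Real.pi))⁻¹ *
      ∫ t in Set.Ioi (0:ℝ),
        Real.exp (-t) / (1 - Real.exp (-2 * t)) ^ ((3:ℝ)/2) * (y - Real.exp (-t) * x) *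
          Real.exp (-(y - Real.exp (-t) * x) ^ 2 / (2 * (1 - Real.exp (-2 * t))))
      = Real.exp ((x ^ 2 - y ^ 2) / 2) * (gaussCDF x - if x > y then 1 else 0) := by
  change (√(2 * π))⁻¹ * ∫ t in Ioi 0, deltaIntegrand x y t = _
  have hright := ((hasDerivAt_gaussCDF x).continuousAt.tendsto.comp
    (tendsto_ouZScore_atTop x y)).const_mul (√(2 * π) * exp ((x ^ 2 - y ^ 2) / 2))
  have hleft := (tendsto_gaussCDF_ouZScore_nhdsGT_zero h1).const_mul
    (√(2 * π) * exp ((x ^ 2 - y ^ 2) / 2))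
  rw [integral_Ioi_of_hasDerivAt_of_tendsto_nhdsGT
    (fun t ht => hasDerivAt_mul_gaussCDF_ouZScore x y ht) (integrableOn_deltaIntegrand h1)
    hleft hright]
  field_simp

/-- For `y ≠ x`, `y ≠ -x`, the integral `Δ_y(x)` equals `e^{(x²-y²)/2}(Φ(x) - 1_{x>y})`. -/
theorem stmt3 (x y : ℝ) (h1 : y ≠ x) (h2 : y ≠ -x) :
    (Real.sqrt (2 * Real.pi))⁻¹ *
      ∫ t in Set.Ioi (0:ℝ),
        Real.exp (-t) / (1 - Real.exp (-2 * t)) ^ ((3:ℝ)/2) * (y - Real.exp (-t) * x) *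
          Real.exp (-(y - Real.exp (-t) * x) ^ 2 / (2 * (1 - Real.exp (-2 * t))))
      = Real.exp ((x ^ 2 - y ^ 2) / 2) * (gaussCDF x - if x > y then 1 else 0) :=
  stmt3_general x y h1
end

section
/- Let σ : [0,1] → (0,∞) satisfy σ(t) ≥ √t / M for some constant M > 0. Then for each n ≥ 2, (1/n!) ∫_{Δ_n} (∫_{s_n^*}^1 σ(t)^{-(n+1)} dt)² ds ≤ C √n M^{2n+2} / (n! (n-1)²) · (1 + 1/n - 4/(n+1)) for some absolute constant C, where Δ_n = {0 ≤ s_1 ≤ ... ≤ s_n ≤ 1} and s_n^* = max(s_1,...,s_n). -/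
/-!
Since `σ t ≥ √t / M`, the integrand `σ(t)^{-(n+1)}` is at most `M^{n+1} t^{-(n+1)/2}`, so the inner
integral is at most `2 M^{n+1} / (n-1) · (s_n^*)^{-(n-1)/2}` and its square at most
`4 M^{2n+2} / (n-1)² · (s_n^*)^{-(n-1)}`. On `Δ_n` the maximum is `s_n`, and `Δ_n` lies in
`{0 ≤ s_i ≤ s_n ≤ 1}`, over which `s_n^{-(n-1)}` integrates (by Fubini, slicing at `s_n = u`) to
`∫₀¹ u^{-(n-1)} u^{n-1} du = 1`. The bound `4 M^{2n+2} / (n! (n-1)²)` obtained this way is the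
claimed one with `C = 24`, because `1 + 1/n - 4/(n+1) = (n-1)² / (n (n+1))`.
-/

open MeasureTheory Set
open scoped ENNReal

def orderedSimplex (n : ℕ) : Set (Fin n → ℝ) :=
  {s | Monotone s ∧ ∀ i, s i ∈ Icc 0 1}

lemma Monotone.iSup_eq_last {n : ℕ} {s : Fin (n + 1) → ℝ} (hs : Monotone s) :
    ⨆ i, s i = s (Fin.last n) :=
  le_antisymm (ciSup_le fun i => hs (Fin.le_last i)) (Finite.le_ciSup s _)

section SqrtLowerBound

variable {M t x : ℝ}

lemma pos_of_sqrt_div_le (hM : 0 < M) (ht : 0 < t) (hx : √t / M ≤ x) : 0 < x :=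
  (div_pos (Real.sqrt_pos.2 ht) hM).trans_le hx

lemma inv_pow_le_of_sqrt_div_le (hM : 0 < M) (ht : 0 < t) (hx : √t / M ≤ x) (k : ℕ) :
    (x ^ k)⁻¹ ≤ M ^ k * t ^ (-(k : ℝ) / 2) := by
  have hsqrt : 0 < √t / M := pos_of_sqrt_div_le hM ht le_rfl
  calc (x ^ k)⁻¹ ≤ ((√t / M) ^ k)⁻¹ := inv_anti₀ (by positivity) (by gcongr)
    _ = M ^ k * (√t ^ k)⁻¹ := by rw [div_pow, inv_div, div_eq_mul_inv]
    _ = M ^ k * t ^ (-(k : ℝ) / 2) := by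
      rw [Real.sqrt_eq_rpow, ← Real.rpow_natCast (t ^ (1 / 2 : ℝ)), ← Real.rpow_mul ht.le,
        ← Real.rpow_neg ht.le]
      ring_nf

end SqrtLowerBound

lemma setIntegral_Icc_rpow_le {a r : ℝ} (ha : 0 < a) (ha1 : a ≤ 1) (hr : r < -1) :
    ∫ t in Icc a 1, t ^ r ≤ a ^ (r + 1) / -(r + 1) := by
  have h0 : (0 : ℝ) ∉ uIcc a 1 := by
    rw [uIcc_of_le ha1]
    exact fun h => (ha.trans_le h.1).false
  rw [integral_Icc_eq_integral_Ioc, ← intervalIntegral.integral_of_le ha1,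
    integral_rpow (Or.inr ⟨hr.ne, h0⟩), Real.one_rpow, ← neg_div_neg_eq, neg_sub]
  gcongr
  · linarith
  · linarith

section IntegralBound

variable {σ : ℝ → ℝ} {M a : ℝ}

lemma setIntegral_inv_pow_le (hM : 0 < M) (ha : 0 < a) (ha1 : a ≤ 1)
    (hσ : ∀ t ∈ Icc a 1, √t / M ≤ σ t) (m : ℕ) :
    ∫ t in Icc a 1, (σ t ^ (m + 3))⁻¹ ≤ 2 * M ^ (m + 3) / (m + 1) * a ^ (-((m : ℝ) + 1) / 2) := by
  set r : ℝ := -((m + 3 : ℕ) : ℝ) / 2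
  have hbound : ∀ t ∈ Icc a 1, (σ t ^ (m + 3))⁻¹ ≤ M ^ (m + 3) * t ^ r :=
    fun t ht => inv_pow_le_of_sqrt_div_le hM (ha.trans_le ht.1) (hσ t ht) _
  have hint : IntegrableOn (fun t => M ^ (m + 3) * t ^ r) (Icc a 1) :=
    (continuousOn_const.mul (continuousOn_id.rpow_const fun t ht =>
      Or.inl (ha.trans_le ht.1).ne')).integrableOn_compact isCompact_Icc
  have hnonneg : ∀ t ∈ Icc a 1, 0 ≤ (σ t ^ (m + 3))⁻¹ := fun t ht =>
    inv_nonneg.2 (pow_nonneg (pos_of_sqrt_div_le hM (ha.trans_le ht.1) (hσ t ht)).le _)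
  have hr : r + 1 = -((m : ℝ) + 1) / 2 := by simp only [r]; push_cast; ring
  calc ∫ t in Icc a 1, (σ t ^ (m + 3))⁻¹ ≤ ∫ t in Icc a 1, M ^ (m + 3) * t ^ r :=
        integral_mono_of_nonneg (ae_restrict_of_forall_mem measurableSet_Icc hnonneg) hint
          (ae_restrict_of_forall_mem measurableSet_Icc hbound)
    _ = M ^ (m + 3) * ∫ t in Icc a 1, t ^ r := integral_const_mul _ _
    _ ≤ M ^ (m + 3) * (a ^ (r + 1) / -(r + 1)) := by
        gcongr
        have : (0 : ℝ) < m + 1 := by positivity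
        exact setIntegral_Icc_rpow_le ha ha1 (by linarith)
    _ = 2 * M ^ (m + 3) / (m + 1) * a ^ (-((m : ℝ) + 1) / 2) := by
        rw [hr]; field_simp

lemma sq_setIntegral_inv_pow_le (hM : 0 < M) (ha : 0 < a) (ha1 : a ≤ 1)
    (hσ : ∀ t ∈ Icc a 1, √t / M ≤ σ t) (m : ℕ) :
    (∫ t in Icc a 1, (σ t ^ (m + 3))⁻¹) ^ 2 ≤ (2 * M ^ (m + 3) / (m + 1)) ^ 2 * (a ^ (m + 1))⁻¹ := by
  have hnonneg : 0 ≤ ∫ t in Icc a 1, (σ t ^ (m + 3))⁻¹ := setIntegral_nonneg measurableSet_Icc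
    fun t ht => inv_nonneg.2 (pow_nonneg (pos_of_sqrt_div_le hM (ha.trans_le ht.1) (hσ t ht)).le _)
  calc (∫ t in Icc a 1, (σ t ^ (m + 3))⁻¹) ^ 2
      ≤ (2 * M ^ (m + 3) / (m + 1) * a ^ (-((m : ℝ) + 1) / 2)) ^ 2 := by
        gcongr; exact setIntegral_inv_pow_le hM ha ha1 hσ m
    _ = (2 * M ^ (m + 3) / (m + 1)) ^ 2 * (a ^ (m + 1))⁻¹ := by
        rw [mul_pow, ← Real.rpow_natCast (a ^ _) 2, ← Real.rpow_mul ha.le,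
          ← Real.rpow_natCast a (m + 1), ← Real.rpow_neg ha.le]
        congr 2
        push_cast; ring

end IntegralBound

lemma lintegral_prod_indicator_fst {α β : Type*} [MeasurableSpace α] [MeasurableSpace β]
    {μ : Measure α} {ν : Measure β} [SFinite ν] {A : Set (α × β)} (hA : MeasurableSet A)
    {g : α → ℝ≥0∞} (hg : Measurable g) :
    ∫⁻ p, A.indicator (fun p => g p.1) p ∂μ.prod ν = ∫⁻ x, g x * ν (Prod.mk x ⁻¹' A) ∂μ := by
  refine (lintegral_prod _ ((hg.comp measurable_fst).indicator hA).aemeasurable).trans ?_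
  exact lintegral_congr fun x => lintegral_indicator_const (measurable_prodMk_left hA) (g x)

lemma lintegral_orderedSimplex_inv_pow_last_le_one (m : ℕ) :
    ∫⁻ s in orderedSimplex (m + 1), (ENNReal.ofReal (s (Fin.last m)) ^ m)⁻¹ ≤ 1 := by
  set A : Set (ℝ × (Fin m → ℝ)) := {p | p.1 ∈ Icc 0 1 ∧ p.2 ∈ univ.pi fun _ => Icc 0 p.1}
  have hA : MeasurableSet A := by measurability
  set ψ := A.indicator fun p => (ENNReal.ofReal p.1 ^ m)⁻¹
  have hψ : Measurable ψ := Measurable.indicator (by fun_prop) hA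
  set e := MeasurableEquiv.piFinSuccAbove (fun _ : Fin (m + 1) => ℝ) (Fin.last m)
  have hle : ∀ s ∈ orderedSimplex (m + 1), (ENNReal.ofReal (s (Fin.last m)) ^ m)⁻¹ ≤ ψ (e s) :=
    fun s hs => (indicator_of_mem (s := A)
      ⟨hs.2 _, fun j _ => ⟨(hs.2 _).1, hs.1 (Fin.le_last _)⟩⟩
        fun p => (ENNReal.ofReal p.1 ^ m)⁻¹).ge
  -- Dropping the order of the first `m` coordinates, the slice at `s_last = u` is the box
  -- `[0, u]^m`, whose volume `u^m` cancels the weight.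
  have hslice : ∀ u, (ENNReal.ofReal u ^ m)⁻¹ * Measure.pi (fun _ => volume) (Prod.mk u ⁻¹' A)
      ≤ (Icc 0 1).indicator 1 u := by
    intro u
    by_cases hu : u ∈ Icc 0 1
    · have : Prod.mk u ⁻¹' A = univ.pi fun _ => Icc 0 u := by
        ext y; simp only [A, mem_preimage, mem_ofPred_eq, hu, true_and]
      rw [this, Measure.pi_pi, indicator_of_mem hu]
      simp
    · have : Prod.mk u ⁻¹' A = ∅ := by
        ext y; simp only [A, mem_preimage, mem_ofPred_eq, hu, false_and, mem_empty_iff_false]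
      simp [this]
  calc ∫⁻ s in orderedSimplex (m + 1), (ENNReal.ofReal (s (Fin.last m)) ^ m)⁻¹
      ≤ ∫⁻ s in orderedSimplex (m + 1), ψ (e s) := setLIntegral_mono (hψ.comp e.measurable) hle
    _ ≤ ∫⁻ s, ψ (e s) := setLIntegral_le_lintegral _ _
    _ = ∫⁻ p, ψ p ∂(volume : Measure ℝ).prod (Measure.pi fun _ => volume) := by
        rw [volume_pi]
        exact (measurePreserving_piFinSuccAbove (fun _ => volume) _).lintegral_comp hψ
    _ = ∫⁻ u, (ENNReal.ofReal u ^ m)⁻¹ * Measure.pi (fun _ => volume) (Prod.mk u ⁻¹' A) :=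
        lintegral_prod_indicator_fst hA (g := fun u => (ENNReal.ofReal u ^ m)⁻¹) (by fun_prop)
    _ ≤ ∫⁻ u, (Icc 0 1).indicator 1 u := lintegral_mono hslice
    _ = 1 := by simp [lintegral_indicator_one measurableSet_Icc]

lemma norm_setIntegral_orderedSimplex_le {E : Type*} [NormedAddCommGroup E] [NormedSpace ℝ E]
    {m : ℕ} {f : (Fin (m + 2) → ℝ) → E} {c : ℝ} (hc : 0 < c)
    (hf : ∀ s ∈ orderedSimplex (m + 2), 0 < s (Fin.last _) →
      ‖f s‖ ≤ c * (s (Fin.last _) ^ (m + 1))⁻¹) :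
    ‖∫ s in orderedSimplex (m + 2), f s‖ ≤ c := by
  have hpoint : ∀ s ∈ orderedSimplex (m + 2),
      ‖f s‖ₑ ≤ ENNReal.ofReal c * (ENNReal.ofReal (s (Fin.last _)) ^ (m + 1))⁻¹ := by
    intro s hs
    rcases (hs.2 (Fin.last _)).1.eq_or_lt with hzero | hpos
    · simp [← hzero, hc]
    · rw [← ofReal_norm, ← ENNReal.ofReal_pow hpos.le,
        ← ENNReal.ofReal_inv_of_pos (by positivity), ← ENNReal.ofReal_mul hc.le]
      exact ENNReal.ofReal_le_ofReal (hf s hs hpos)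
  rw [← ENNReal.ofReal_le_ofReal_iff hc.le, ofReal_norm]
  calc ‖∫ s in orderedSimplex (m + 2), f s‖ₑ ≤ ∫⁻ s in orderedSimplex (m + 2), ‖f s‖ₑ :=
        enorm_integral_le_lintegral_enorm _
    _ ≤ ∫⁻ s in orderedSimplex (m + 2),
          ENNReal.ofReal c * (ENNReal.ofReal (s (Fin.last _)) ^ (m + 1))⁻¹ :=
        setLIntegral_mono (by fun_prop) hpoint
    _ = ENNReal.ofReal c *
          ∫⁻ s in orderedSimplex (m + 2), (ENNReal.ofReal (s (Fin.last _)) ^ (m + 1))⁻¹ :=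
        lintegral_const_mul _ (by fun_prop)
    _ ≤ ENNReal.ofReal c :=
        mul_le_of_le_one_right' (lintegral_orderedSimplex_inv_pow_last_le_one _)

lemma four_div_sq_le {x : ℝ} (hx : 2 ≤ x) :
    4 / (x - 1) ^ 2 ≤ 24 * √x / (x - 1) ^ 2 * (1 + 1 / x - 4 / (x + 1)) := by
  have hsqrt : 1 ≤ √x := Real.one_le_sqrt.2 (by linarith)
  have hfactor : 1 + 1 / x - 4 / (x + 1) = (x - 1) ^ 2 / (x * (x + 1)) := by
    field_simp; ring
  rw [hfactor, div_mul_div_comm, mul_comm ((x - 1) ^ 2), ← div_mul_div_comm,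
    div_self (by nlinarith), mul_one, div_le_div_iff₀ (by nlinarith) (by positivity)]
  nlinarith

/-- If `σ(t) ≥ √t / M` on `[0,1]`, then for `n ≥ 2`,
`(1/n!) ∫_{Δ_n} (∫_{s_n^*}^1 σ(t)^{-(n+1)} dt)² ds
  ≤ C √n M^{2n+2}/(n! (n-1)²) · (1 + 1/n - 4/(n+1))` for an absolute constant `C`,
where `Δ_n = {0 ≤ s₁ ≤ … ≤ s_n ≤ 1}` and `s_n^* = max(s₁,…,s_n)`. -/
theorem stmt19 :
    ∃ C : ℝ, 0 < C ∧ ∀ M : ℝ, 0 < M → ∀ σ : ℝ → ℝ, Measurable σ →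
      (∀ t ∈ Set.Icc (0:ℝ) 1, Real.sqrt t / M ≤ σ t) →
      ∀ n : ℕ, 2 ≤ n →
        (1 / (n.factorial : ℝ)) *
            ∫ s in {s : Fin n → ℝ | Monotone s ∧ ∀ i, s i ∈ Set.Icc (0:ℝ) 1},
              (∫ t in Set.Icc (⨆ i, s i) 1, (σ t ^ (n + 1))⁻¹) ^ 2
          ≤ C * Real.sqrt n * M ^ (2 * n + 2) / ((n.factorial : ℝ) * ((n : ℝ) - 1) ^ 2)
              * (1 + 1 / (n : ℝ) - 4 / ((n : ℝ) + 1)) := by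
  refine ⟨24, by norm_num, fun M hM σ _ hσ n hn => ?_⟩
  obtain ⟨m, rfl⟩ : ∃ m, n = m + 2 := ⟨n - 2, by omega⟩
  have hsimplex : ∫ s in orderedSimplex (m + 2), (∫ t in Icc (⨆ i, s i) 1, (σ t ^ (m + 3))⁻¹) ^ 2
      ≤ (2 * M ^ (m + 3) / (m + 1)) ^ 2 := by
    refine (Real.le_norm_self _).trans
      (norm_setIntegral_orderedSimplex_le (by positivity) fun s hs hpos => ?_)
    rw [hs.1.iSup_eq_last, Real.norm_of_nonneg (sq_nonneg _)]
    exact sq_setIntegral_inv_pow_le hM hpos (hs.2 _).2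
      (fun t ht => hσ t ⟨hpos.le.trans ht.1, ht.2⟩) m
  have hn : (2 : ℝ) ≤ ((m + 2 : ℕ) : ℝ) := by push_cast; linarith [m.cast_nonneg (α := ℝ)]
  have hsub : ((m + 2 : ℕ) : ℝ) - 1 = m + 1 := by push_cast; ring
  have hpow : M ^ (2 * (m + 2) + 2) = (M ^ (m + 3)) ^ 2 := by ring
  rw [hpow, ← div_div]
  calc _ ≤ 1 / ((m + 2).factorial : ℝ) * (2 * M ^ (m + 3) / (((m + 2 : ℕ) : ℝ) - 1)) ^ 2 := by
        rw [hsub]; exact mul_le_mul_of_nonneg_left hsimplex (by positivity)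
    _ = (M ^ (m + 3)) ^ 2 / (m + 2).factorial * (4 / (((m + 2 : ℕ) : ℝ) - 1) ^ 2) := by
        rw [div_pow]; ring
    _ ≤ (M ^ (m + 3)) ^ 2 / (m + 2).factorial * (24 * √((m + 2 : ℕ) : ℝ) /
          (((m + 2 : ℕ) : ℝ) - 1) ^ 2 * (1 + 1 / ((m + 2 : ℕ) : ℝ) - 4 / (((m + 2 : ℕ) : ℝ) + 1))) := by
        gcongr; exact four_div_sq_le hn
    _ = _ := by ring
end
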